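/- arXiv:1707.02650 — 4 statements merged into one kernel-verified Lean document; each statement's English description precedes it below -/
import Mathlib

section
/- Let n ≥ 1 and let a_1,…,a_n be positive integers with ∑ a_i = 2b. In the graph G' (nodes {w_0,…,w_n} ∪ {v_1,…,v_n}; for each i, edge (w_{i-1},w_i) with delay a_i, and edges (w_{i-1},v_i),(v_i,w_i) with delay 0; all capacities 1), every feasible flow of rate R = 2 from s = w_0 to t = w_n places flow rate exactly 1 on every edge of G', and its total weighted delay satisfies ∑_{p∈P} f^p·d^p = ∑_{e∈E} f_e·d_e = 2b. -/
/-- A directed network: each edge has a source node, a destination node,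
a non-negative integer capacity and a non-negative integer delay. -/
structure Network (V : Type) (E : Type) where
  src : E → V
  dst : E → V
  cap : E → ℕ
  delay : E → ℕ

namespace Network

variable {V E : Type}

/-- `N.IsPath s t p` : the list of edges `p` forms a directed path from `s` to `t`. -/
def IsPath (N : Network V E) : V → V → List E → Prop
  | s, t, [] => s = t
  | s, t, e :: es => N.src e = s ∧ N.IsPath (N.dst e) t es

/-- The delay of a path: the sum of the delays of its edges. -/
def pathDelay (N : Network V E) (p : List E) : ℕ := (p.map N.delay).sum

end Network

/-- A (path-based) flow from `s` to `t`: a finitely-supported assignment of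
non-negative rates to `s`–`t` paths. -/
structure PathFlow {V E : Type} (N : Network V E) (s t : V) where
  f : List E →₀ ℝ
  nonneg : ∀ p, 0 ≤ f p
  isPath : ∀ p ∈ f.support, N.IsPath s t p

namespace PathFlow

variable {V E : Type} [DecidableEq E] {N : Network V E} {s t : V}

/-- Total rate of the flow. -/
noncomputable def totalRate (F : PathFlow N s t) : ℝ := ∑ p ∈ F.f.support, F.f p

/-- Rate carried by edge `e`: the sum of the rates of all paths containing `e`. -/
noncomputable def edgeRate (F : PathFlow N s t) (e : E) : ℝ :=
  ∑ p ∈ F.f.support, if e ∈ p then F.f p else 0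

/-- Feasibility with rate `R`: total rate is `R` and every edge capacity is respected. -/
def Feasible (F : PathFlow N s t) (R : ℝ) : Prop :=
  F.totalRate = R ∧ ∀ e, F.edgeRate e ≤ (N.cap e : ℝ)

/-- The maximum delay over flow-carrying paths. -/
def maxDelay (F : PathFlow N s t) : ℕ := F.f.support.sup N.pathDelay

/-- An integer flow assigns a non-negative integer rate to every path. -/
def IsInteger (F : PathFlow N s t) : Prop := ∀ p, ∃ m : ℕ, F.f p = (m : ℝ)

end PathFlow
/-- Nodes of the partition-reduction graph `G'`: `Sum.inl i` is `w_i` (`i = 0,…,n`),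
`Sum.inr i` is `v_{i+1}` (`i = 0,…,n-1`). -/
abbrev GV (n : ℕ) := Fin (n + 1) ⊕ Fin n

/-- Edges of `G'`: `Sum.inl i` is the direct edge `(w_i, w_{i+1})` of delay `a i`;
`Sum.inr (Sum.inl i)` is `(w_i, v_{i+1})` and `Sum.inr (Sum.inr i)` is `(v_{i+1}, w_{i+1})`,
both of delay `0`. All edges have capacity `1`. -/
abbrev GE (n : ℕ) := Fin n ⊕ (Fin n ⊕ Fin n)

/-- The graph `G'` reduced from the partition problem. -/
def Gpart (n : ℕ) (a : Fin n → ℕ) : Network (GV n) (GE n) where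
  src
    | Sum.inl i => Sum.inl i.castSucc
    | Sum.inr (Sum.inl i) => Sum.inl i.castSucc
    | Sum.inr (Sum.inr i) => Sum.inr i
  dst
    | Sum.inl i => Sum.inl i.succ
    | Sum.inr (Sum.inl i) => Sum.inr i
    | Sum.inr (Sum.inr i) => Sum.inl i.succ
  cap := fun _ => 1
  delay
    | Sum.inl i => a i
    | Sum.inr _ => 0

/-!
Give the nodes of `G'` the levels `w_j ↦ 2j` and `v_{j+1} ↦ 2j + 1`, which increase strictly
along every edge. Hence an `s`–`t` path uses no edge twice and crosses every level cut exactly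
once. The cut just above `w_i` is crossed only by `(w_i, w_{i+1})` and `(w_i, v_{i+1})`, the one
just above `v_{i+1}` only by `(w_i, w_{i+1})` and `(v_{i+1}, w_{i+1})`; so each of these pairs
carries the whole rate `2`, and with capacities `1` every edge carries exactly `1`. Because paths
are simple, exchanging the sums over paths and edges turns `∑ f^p d^p` into `∑ f_e d_e`, which is
then `∑ a_i = 2b`.
-/

open Finset

theorem List.Nodup.countP_mem_eq_card_filter {E : Type*} [DecidableEq E] {p : List E}
    (hp : p.Nodup) (C : Finset E) : p.countP (· ∈ C) = #{e ∈ C | e ∈ p} := by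
  rw [List.countP_eq_length_filter, ← List.toFinset_card_of_nodup (hp.filter _)]
  congr 1
  ext e
  simp [and_comm]

namespace Network.IsPath

variable {V E : Type} {α : Type*} [LinearOrder α] {N : Network V E} {pos : V → α}
  {v t : V} {p : List E}

theorem le_src_of_mem (hpos : ∀ e, pos (N.src e) ≤ pos (N.dst e)) (hp : N.IsPath v t p)
    {e : E} (he : e ∈ p) : pos v ≤ pos (N.src e) := by
  induction p generalizing v with
  | nil => simp at he
  | cons e' es ih =>
    obtain ⟨rfl, hes⟩ := hp
    rcases List.mem_cons.mp he with rfl | he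
    · exact le_rfl
    · exact (hpos e').trans (ih hes he)

theorem pos_le_pos (hpos : ∀ e, pos (N.src e) ≤ pos (N.dst e)) (hp : N.IsPath v t p) :
    pos v ≤ pos t := by
  induction p generalizing v with
  | nil => exact le_of_eq (congrArg pos hp)
  | cons e es ih =>
    obtain ⟨rfl, hes⟩ := hp
    exact (hpos e).trans (ih hes)

theorem nodup (hpos : ∀ e, pos (N.src e) < pos (N.dst e)) (hp : N.IsPath v t p) : p.Nodup := by
  induction p generalizing v with
  | nil => exact List.nodup_nil
  | cons e es ih =>
    obtain ⟨-, hes⟩ := hp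
    exact List.nodup_cons.2
      ⟨fun he => (hpos e).not_ge (hes.le_src_of_mem (fun e => (hpos e).le) he), ih hes⟩

theorem countP_cut [DecidableEq E] (hpos : ∀ e, pos (N.src e) ≤ pos (N.dst e)) {k : α}
    {C : Finset E} (hC : ∀ e, e ∈ C ↔ pos (N.src e) ≤ k ∧ k < pos (N.dst e)) (hp : N.IsPath v t p) :
    p.countP (· ∈ C) = if pos v ≤ k ∧ k < pos t then 1 else 0 := by
  induction p generalizing v with
  | nil =>
    obtain rfl : v = t := hp
    simp
  | cons e es ih =>
    obtain ⟨rfl, hes⟩ := hp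
    have := hpos e
    have := hes.pos_le_pos hpos
    rw [List.countP_cons, ih hes]
    simp only [decide_eq_true_eq, hC]
    split_ifs <;> grind

end Network.IsPath

namespace PathFlow

variable {V E : Type} [DecidableEq E] {N : Network V E} {s t : V} (F : PathFlow N s t)

theorem sum_edgeRate_mul (S : Finset E) (g : E → ℝ) :
    ∑ e ∈ S, F.edgeRate e * g e = ∑ p ∈ F.f.support, F.f p * ∑ e ∈ S with e ∈ p, g e := by
  simp only [edgeRate, sum_mul, mul_sum, sum_filter]
  rw [sum_comm]
  refine sum_congr rfl fun p _ => sum_congr rfl fun e _ => ?_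
  split_ifs <;> simp

theorem sum_mul_pathDelay [Fintype E] (hnodup : ∀ p ∈ F.f.support, p.Nodup) :
    ∑ p ∈ F.f.support, F.f p * (N.pathDelay p : ℝ) = ∑ e, F.edgeRate e * (N.delay e : ℝ) := by
  rw [sum_edgeRate_mul]
  refine sum_congr rfl fun p hp => ?_
  rw [show ({e | e ∈ p} : Finset E) = p.toFinset by ext; simp,
    List.sum_toFinset _ (hnodup p hp), Network.pathDelay, Nat.cast_list_sum, List.map_map]
  rfl

theorem sum_edgeRate_cut {α : Type*} [LinearOrder α] {pos : V → α}
    (hpos : ∀ e, pos (N.src e) < pos (N.dst e)) {k : α} (hk : pos s ≤ k ∧ k < pos t)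
    {C : Finset E} (hC : ∀ e, e ∈ C ↔ pos (N.src e) ≤ k ∧ k < pos (N.dst e)) :
    ∑ e ∈ C, F.edgeRate e = F.totalRate := by
  have hcross : ∀ p ∈ F.f.support, #{e ∈ C | e ∈ p} = 1 := fun p hp => by
    have hpath := F.isPath p hp
    rw [← (hpath.nodup hpos).countP_mem_eq_card_filter,
      hpath.countP_cut (fun e => (hpos e).le) hC, if_pos hk]
  calc ∑ e ∈ C, F.edgeRate e = ∑ e ∈ C, F.edgeRate e * 1 := by simp only [mul_one]
    _ = ∑ p ∈ F.f.support, F.f p * #{e ∈ C | e ∈ p} := by rw [sum_edgeRate_mul]; simp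
    _ = F.totalRate := sum_congr rfl fun p hp => by rw [hcross p hp, Nat.cast_one, mul_one]

end PathFlow

namespace Gpart

variable {n : ℕ} (a : Fin n → ℕ)

def level : GV n → ℕ
  | Sum.inl j => 2 * j
  | Sum.inr j => 2 * j + 1

theorem level_src_lt_level_dst (e : GE n) :
    level ((Gpart n a).src e) < level ((Gpart n a).dst e) := by
  rcases e with i | i | i <;>
    simp only [Gpart, level, Fin.val_castSucc, Fin.val_succ] <;> omega

variable {a} (F : PathFlow (Gpart n a) (Sum.inl 0) (Sum.inl (Fin.last n)))

theorem edgeRate_add_edgeRate_eq_totalRate (i : Fin n) :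
    F.edgeRate (Sum.inl i) + F.edgeRate (Sum.inr (Sum.inl i)) = F.totalRate ∧
    F.edgeRate (Sum.inl i) + F.edgeRate (Sum.inr (Sum.inr i)) = F.totalRate := by
  have hcut (k : ℕ) := F.sum_edgeRate_cut (level_src_lt_level_dst a) (k := k)
  refine ⟨(sum_pair (by simp)).symm.trans (hcut (2 * i) ?_ ?_),
    (sum_pair (by simp)).symm.trans (hcut (2 * i + 1) ?_ ?_)⟩
  all_goals try rintro (j | j | j)
  all_goals
    simp only [mem_insert, mem_singleton, Sum.inl.injEq, Sum.inr.injEq, reduceCtorEq, or_false,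
      false_or, false_iff, Fin.ext_iff, Gpart, level, Fin.val_castSucc, Fin.val_succ,
      Fin.val_zero, Fin.val_last]
    omega

end Gpart

theorem gpart_flow_saturates_general (n b : ℕ) (a : Fin n → ℕ)
    (hsum : ∑ i, a i = 2 * b)
    (F : PathFlow (Gpart n a) (Sum.inl 0) (Sum.inl (Fin.last n)))
    (hF : F.Feasible 2) :
    (∀ e : GE n, F.edgeRate e = 1) ∧
    (∑ p ∈ F.f.support, F.f p * ((Gpart n a).pathDelay p : ℝ)
        = ∑ e : GE n, F.edgeRate e * ((Gpart n a).delay e : ℝ)) ∧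
    (∑ e : GE n, F.edgeRate e * ((Gpart n a).delay e : ℝ) = 2 * b) := by
  obtain ⟨hrate, hcap⟩ := hF
  have hle (e : GE n) : F.edgeRate e ≤ 1 := by simpa [Gpart] using hcap e
  have hsat : ∀ e : GE n, F.edgeRate e = 1 := by
    rintro (i | i | i) <;>
      linarith [hrate, Gpart.edgeRate_add_edgeRate_eq_totalRate F i, hle (Sum.inl i),
        hle (Sum.inr (Sum.inl i)), hle (Sum.inr (Sum.inr i))]
  refine ⟨hsat, F.sum_mul_pathDelay fun p hp =>
    (F.isPath p hp).nodup (Gpart.level_src_lt_level_dst a), ?_⟩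
  simp only [hsat, one_mul]
  simpa [Fintype.sum_sum_type, Gpart] using congrArg (Nat.cast : ℕ → ℝ) hsum

/-- **Every feasible rate-2 flow in `G'` saturates every edge (Theorem 1, "if" part setup).**
For `n ≥ 1` and positive integers `a i` summing to `2 b`, every feasible flow of rate `R = 2`
from `w₀` to `wₙ` in `G'` places a flow rate of exactly `1` on every edge, and its total
weighted delay satisfies `∑_p f^p · d^p = ∑_e f_e · d_e = 2 b`. -/
theorem gpart_flow_saturates (n b : ℕ) (hn : 1 ≤ n) (a : Fin n → ℕ)
    (ha : ∀ i, 0 < a i) (hsum : ∑ i, a i = 2 * b)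
    (F : PathFlow (Gpart n a) (Sum.inl 0) (Sum.inl (Fin.last n)))
    (hF : F.Feasible 2) :
    (∀ e : GE n, F.edgeRate e = 1) ∧
    (∑ p ∈ F.f.support, F.f p * ((Gpart n a).pathDelay p : ℝ)
        = ∑ e : GE n, F.edgeRate e * ((Gpart n a).delay e : ℝ)) ∧
    (∑ e : GE n, F.edgeRate e * ((Gpart n a).delay e : ℝ) = 2 * b) :=
  gpart_flow_saturates_general n b a hsum F hF
end

section
/- Let a_1,…,a_n be positive integers with ∑ a_i = 2b. If in the graph G' (nodes {w_0,…,w_n} ∪ {v_1,…,v_n}; for each i, edge (w_{i-1},w_i) with delay a_i, and edges (w_{i-1},v_i),(v_i,w_i) with delay 0; all capacities 1) there exists a feasible flow of rate R = 2 from w_0 to w_n whose maximum delay is at most b, then there is a partition of {a_1,…,a_n} into two sets A_1, A_2 with ∑_{a_i∈A_1} a_i = ∑_{a_j∈A_2} a_j = b. -/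
/-! Every `w₀`–`wₙ` path leaves each `w_{i-1}` exactly once, either along the direct edge of
delay `a i` or through `v_i` at delay `0`, so its delay is the sum of the `a i` over the direct
edges it takes. Both edges out of `w_{i-1}` have capacity `1` and the flow has rate `2`, so every
direct edge carries rate exactly `1`, and the flow-weighted total delay is `∑ a i = 2 b`. Since
no used path has delay above `b`, some used path has delay exactly `b`; its direct edges give
one half of the partition. -/

-- Core derives `BEq` on sums without a `LawfulBEq` instance, which `List.count` lemmas need.
instance Sum.instLawfulBEq {α β : Type*} [BEq α] [BEq β] [LawfulBEq α] [LawfulBEq β] :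
    LawfulBEq (α ⊕ β) where
  rfl {x} := by cases x <;> simp [BEq.beq, Sum.instBEq.beq]
  eq_of_beq {x y} h := by cases x <;> cases y <;> simp_all [BEq.beq, Sum.instBEq.beq]

-- The `Decidable` argument is implicit so that it unifies with the instance inside `edgeRate`.
theorem List.ite_mem_eq_count_mul {α R : Type*} [BEq α] [LawfulBEq α] [Semiring R] {l : List α}
    {x : α} {_ : Decidable (x ∈ l)} (h : l.count x ≤ 1) (r : R) :
    (if x ∈ l then r else 0) = l.count x * r := by
  split_ifs with hx
  · rw [show l.count x = 1 by have := List.count_pos_iff.2 hx; omega, Nat.cast_one, one_mul]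
  · rw [List.count_eq_zero_of_not_mem hx, Nat.cast_zero, zero_mul]

namespace PathFlow

variable {V E : Type} {N : Network V E} {s t : V}

theorem pos_of_mem_support (F : PathFlow N s t) {p : List E} (hp : p ∈ F.f.support) :
    0 < F.f p :=
  (F.nonneg p).lt_of_ne' (Finsupp.mem_support_iff.1 hp)

theorem exists_pathDelay_eq_of_sum_mul_pathDelay [DecidableEq E] (F : PathFlow N s t)
    {b : ℕ} (hR : 0 < F.totalRate) (hD : F.maxDelay ≤ b)
    (h : ∑ p ∈ F.f.support, F.f p * N.pathDelay p = F.totalRate * b) :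
    ∃ p ∈ F.f.support, N.pathDelay p = b := by
  by_contra! hlt
  have hne : F.f.support.Nonempty := by
    by_contra! hempty
    simp [totalRate, hempty] at hR
  have : ∑ p ∈ F.f.support, F.f p * N.pathDelay p < ∑ p ∈ F.f.support, F.f p * b :=
    Finset.sum_lt_sum_of_nonempty hne fun p hp =>
      mul_lt_mul_of_pos_left (Nat.cast_lt.2 <| (Finset.le_sup hp |>.trans hD).lt_of_ne (hlt p hp))
        (F.pos_of_mem_support hp)
  rw [← Finset.sum_mul] at this
  exact this.ne h

theorem edgeRate_eq_sum_count [DecidableEq E] [BEq E] [LawfulBEq E] (F : PathFlow N s t) {e : E}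
    (he : ∀ p ∈ F.f.support, p.count e ≤ 1) :
    F.edgeRate e = ∑ p ∈ F.f.support, p.count e * F.f p :=
  Finset.sum_congr rfl fun p hp => List.ite_mem_eq_count_mul (he p hp) _

end PathFlow

namespace Gpart

variable {n : ℕ} {a : Fin n → ℕ}

theorem isPath_inr {k : Fin n} {m : Fin (n + 1)} {p : List (GE n)}
    (hp : (Gpart n a).IsPath (Sum.inr k) (Sum.inl m) p) :
    ∃ q, p = Sum.inr (Sum.inr k) :: q ∧ (Gpart n a).IsPath (Sum.inl k.succ) (Sum.inl m) q := by
  match p, hp with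
  | [], hp => simp [Network.IsPath] at hp
  | Sum.inl _ :: _, hp => simp [Network.IsPath, Gpart] at hp
  | Sum.inr (Sum.inl _) :: _, hp => simp [Network.IsPath, Gpart] at hp
  | Sum.inr (Sum.inr k') :: q, hp =>
    obtain ⟨hk, hq⟩ := hp
    obtain rfl : k' = k := by simpa [Gpart] using hk
    exact ⟨q, rfl, hq⟩

theorem pathDelay_eq_sum_count (p : List (GE n)) :
    (Gpart n a).pathDelay p = ∑ j, p.count (Sum.inl j) * a j := by
  induction p with
  | nil => simp [Network.pathDelay]
  | cons e p ih =>
    simp only [Network.pathDelay, List.map_cons, List.sum_cons] at ih ⊢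
    rw [ih]
    rcases e with k | k <;>
      simp [Gpart, List.count_cons, add_mul, Finset.sum_add_distrib, add_comm, beq_iff_eq]

theorem count_add_count_of_isPath :
    ∀ {i : Fin (n + 1)} {p : List (GE n)},
      (Gpart n a).IsPath (Sum.inl i) (Sum.inl (Fin.last n)) p → ∀ j : Fin n,
        p.count (Sum.inl j) + p.count (Sum.inr (Sum.inl j)) = if i ≤ j.castSucc then 1 else 0
  | i, [], hp, j => by
    obtain rfl : i = Fin.last n := by simpa [Network.IsPath] using hp
    simp [(Fin.castSucc_lt_last j).not_ge]
  | i, Sum.inl k :: es, hp, j => by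
    obtain ⟨hk, hes⟩ := hp
    obtain rfl : k.castSucc = i := by simpa [Gpart] using hk
    have ih := count_add_count_of_isPath hes j
    simp only [List.count_cons, beq_iff_eq, Sum.inl.injEq, reduceCtorEq, ↓reduceIte, Fin.le_def,
      Fin.ext_iff, Fin.val_succ, Fin.val_castSucc] at ih ⊢
    split_ifs at ih ⊢ <;> omega
  | i, Sum.inr (Sum.inl k) :: es, hp, j => by
    obtain ⟨hk, hes⟩ := hp
    obtain rfl : k.castSucc = i := by simpa [Gpart] using hk
    obtain ⟨q, rfl, hq⟩ := isPath_inr hes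
    have ih := count_add_count_of_isPath hq j
    simp only [List.count_cons, beq_iff_eq, Sum.inl.injEq, Sum.inr.injEq, reduceCtorEq,
      ↓reduceIte, Fin.le_def, Fin.ext_iff, Fin.val_succ, Fin.val_castSucc] at ih ⊢
    split_ifs at ih ⊢ <;> omega
  | i, Sum.inr (Sum.inr k) :: es, hp, j => by simp [Network.IsPath, Gpart] at hp

theorem count_add_count_of_isPath_zero {p : List (GE n)}
    (hp : (Gpart n a).IsPath (Sum.inl 0) (Sum.inl (Fin.last n)) p) (j : Fin n) :
    p.count (Sum.inl j) + p.count (Sum.inr (Sum.inl j)) = 1 := by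
  simpa using count_add_count_of_isPath hp j

theorem pathDelay_eq_sum_filter {p : List (GE n)}
    (hp : (Gpart n a).IsPath (Sum.inl 0) (Sum.inl (Fin.last n)) p) :
    (Gpart n a).pathDelay p = ∑ j with Sum.inl j ∈ p, a j := by
  rw [pathDelay_eq_sum_count, Finset.sum_filter]
  refine Finset.sum_congr rfl fun j _ => ?_
  have := count_add_count_of_isPath_zero hp j
  rw [List.ite_mem_eq_count_mul (by omega), Nat.cast_id]

variable (F : PathFlow (Gpart n a) (Sum.inl 0) (Sum.inl (Fin.last n)))

theorem edgeRate_inl_add_edgeRate_inr (j : Fin n) :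
    F.edgeRate (Sum.inl j) + F.edgeRate (Sum.inr (Sum.inl j)) = F.totalRate := by
  have hcount := fun p hp => count_add_count_of_isPath_zero (F.isPath p hp) j
  rw [F.edgeRate_eq_sum_count fun p hp => by have := hcount p hp; omega,
    F.edgeRate_eq_sum_count fun p hp => by have := hcount p hp; omega,
    ← Finset.sum_add_distrib, PathFlow.totalRate]
  refine Finset.sum_congr rfl fun p hp => ?_
  rw [← add_mul, ← Nat.cast_add, hcount p hp, Nat.cast_one, one_mul]

variable {F} in
theorem edgeRate_inl_eq_one (hF : F.Feasible 2) (j : Fin n) : F.edgeRate (Sum.inl j) = 1 := by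
  obtain ⟨hrate, hcap⟩ := hF
  have hsplit := edgeRate_inl_add_edgeRate_inr F j
  have hdirect : F.edgeRate (Sum.inl j) ≤ 1 := (hcap _).trans_eq Nat.cast_one
  have hdetour : F.edgeRate (Sum.inr (Sum.inl j)) ≤ 1 := (hcap _).trans_eq Nat.cast_one
  linarith

theorem sum_mul_pathDelay :
    ∑ p ∈ F.f.support, F.f p * (Gpart n a).pathDelay p =
      ∑ j, a j * F.edgeRate (Sum.inl j) := by
  have hrate (j : Fin n) :
      F.edgeRate (Sum.inl j) = ∑ p ∈ F.f.support, p.count (Sum.inl j) * F.f p :=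
    F.edgeRate_eq_sum_count fun p hp => by
      have := count_add_count_of_isPath_zero (F.isPath p hp) j; omega
  simp_rw [hrate, pathDelay_eq_sum_count, Nat.cast_sum, Nat.cast_mul, Finset.mul_sum,
    Finset.sum_comm (s := F.f.support)]
  refine Finset.sum_congr rfl fun j _ => Finset.sum_congr rfl fun p _ => by ring

end Gpart

theorem gpart_flow_to_partition_general (n b : ℕ) (a : Fin n → ℕ)
    (hsum : ∑ i, a i = 2 * b)
    (F : PathFlow (Gpart n a) (Sum.inl 0) (Sum.inl (Fin.last n)))
    (hF : F.Feasible 2) (hD : F.maxDelay ≤ b) :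
    ∃ S : Finset (Fin n), ∑ i ∈ S, a i = b ∧ ∑ i ∈ Sᶜ, a i = b := by
  have hweighted : ∑ p ∈ F.f.support, F.f p * (Gpart n a).pathDelay p = F.totalRate * b := by
    simp only [Gpart.sum_mul_pathDelay, Gpart.edgeRate_inl_eq_one hF, mul_one, hF.1]
    exact_mod_cast hsum
  obtain ⟨p, hp, hpb⟩ :=
    F.exists_pathDelay_eq_of_sum_mul_pathDelay (by rw [hF.1]; norm_num) hD hweighted
  have hS := (Gpart.pathDelay_eq_sum_filter (F.isPath p hp)).symm.trans hpb
  refine ⟨_, hS, ?_⟩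
  have := Finset.sum_add_sum_compl {j | Sum.inl j ∈ p} a
  omega

/-- **"If" part of Theorem 1.** For `n ≥ 1` and positive integers `a i` summing to `2 b`:
if there is a feasible flow of rate `R = 2` from `w₀` to `wₙ` in `G'` whose maximum delay is
at most `b`, then the `a i` can be partitioned into two sets each summing to `b`
(the set indexed by `S` and the one indexed by its complement). -/
theorem gpart_flow_to_partition (n b : ℕ) (hn : 1 ≤ n) (a : Fin n → ℕ)
    (ha : ∀ i, 0 < a i) (hsum : ∑ i, a i = 2 * b)
    (F : PathFlow (Gpart n a) (Sum.inl 0) (Sum.inl (Fin.last n)))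
    (hF : F.Feasible 2) (hD : F.maxDelay ≤ b) :
    ∃ S : Finset (Fin n), ∑ i ∈ S, a i = b ∧ ∑ i ∈ Sᶜ, a i = b :=
  gpart_flow_to_partition_general n b a hsum F hF hD
end

section
/- Let a_1,…,a_n be positive integers with ∑ a_i = 2b. If {a_1,…,a_n} admits a partition into two sets A_1, A_2 with ∑_{a_i∈A_1} a_i = ∑_{a_j∈A_2} a_j = b, then in the graph G' (nodes {w_0,…,w_n} ∪ {v_1,…,v_n}; for each i, edge (w_{i-1},w_i) with delay a_i, and edges (w_{i-1},v_i),(v_i,w_i) with delay 0; all capacities 1) there exist two edge-disjoint w_0–w_n paths p_1, p_2, each of delay exactly b, so that assigning unit rate to each of them yields a feasible flow of rate R = 2 with maximum delay D(f) = b. -/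
namespace Network

variable {V E : Type} (N : Network V E)

theorem IsPath.append {s m t : V} :
    ∀ {p q : List E}, N.IsPath s m p → N.IsPath m t q → N.IsPath s t (p ++ q)
  | [], _, hp, hq => by rwa [show s = m from hp]
  | _ :: _, _, hp, hq => ⟨hp.1, IsPath.append hp.2 hq⟩

theorem IsPath.ne_nil {s t : V} {p : List E} (hp : N.IsPath s t p) (hst : s ≠ t) : p ≠ [] := by
  rintro rfl
  exact hst hp

theorem isPath_flatten_ofFn {n : ℕ} (w : Fin (n + 1) → V) (seg : Fin n → List E)
    (hseg : ∀ i, N.IsPath (w i.castSucc) (w i.succ) (seg i)) :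
    N.IsPath (w 0) (w (Fin.last n)) (List.ofFn seg).flatten := by
  induction n with
  | zero => rfl
  | succ n ih =>
    rw [List.ofFn_succ, List.flatten_cons, ← Fin.succ_last]
    refine IsPath.append N (hseg 0) (ih (fun i => w i.succ) (fun i => seg i.succ) fun i => ?_)
    simpa only [Fin.succ_castSucc] using hseg i.succ

theorem pathDelay_flatten (L : List (List E)) :
    N.pathDelay L.flatten = (L.map N.pathDelay).sum := by
  simp only [pathDelay, List.map_flatten, List.sum_flatten, List.map_map, Function.comp_def]
  rfl

end Network

namespace PathFlow

variable {V E : Type} [DecidableEq E] {N : Network V E} {s t : V}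

noncomputable def unitOn (P : Finset (List E)) (hP : ∀ p ∈ P, N.IsPath s t p) :
    PathFlow N s t where
  f := Finsupp.onFinset P (fun p => if p ∈ P then 1 else 0) fun p hp => by
    simpa using hp
  nonneg p := by
    simp only [Finsupp.onFinset_apply]
    positivity
  isPath p hp := hP p (Finsupp.support_onFinset_subset hp)

variable (P : Finset (List E)) (hP : ∀ p ∈ P, N.IsPath s t p)

theorem unitOn_apply (p : List E) : (unitOn P hP).f p = if p ∈ P then 1 else 0 :=
  rfl

theorem support_unitOn : (unitOn P hP).f.support = P := by
  ext p
  simp [unitOn_apply]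

theorem totalRate_unitOn : (unitOn P hP).totalRate = P.card := by
  simp [totalRate, support_unitOn, unitOn_apply]

theorem edgeRate_unitOn (e : E) : (unitOn P hP).edgeRate e = {p ∈ P | e ∈ p}.card := by
  rw [edgeRate, support_unitOn, ← Finset.sum_boole]
  refine Finset.sum_congr rfl fun p hp => ?_
  simp [unitOn_apply, hp]

theorem feasible_unitOn (hdisj : (P : Set (List E)).Pairwise List.Disjoint)
    (hcap : ∀ e, 1 ≤ N.cap e) : (unitOn P hP).Feasible P.card := by
  refine ⟨totalRate_unitOn P hP, fun e => ?_⟩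
  have hload : {p ∈ P | e ∈ p}.card ≤ 1 := by
    refine Finset.card_le_one.mpr fun p hp q hq => ?_
    rw [Finset.mem_filter] at hp hq
    by_contra hpq
    exact hdisj hp.1 hq.1 hpq hp.2 hq.2
  rw [edgeRate_unitOn]
  exact_mod_cast hload.trans (hcap e)

theorem maxDelay_unitOn : (unitOn P hP).maxDelay = P.sup N.pathDelay := by
  rw [maxDelay, support_unitOn]

end PathFlow

namespace Gpart

variable {n : ℕ}

def segment (S : Finset (Fin n)) (i : Fin n) : List (GE n) :=
  if i ∈ S then [Sum.inl i] else [Sum.inr (Sum.inl i), Sum.inr (Sum.inr i)]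

def partitionPath (S : Finset (Fin n)) : List (GE n) :=
  (List.ofFn (segment S)).flatten

variable (a : Fin n → ℕ) (S : Finset (Fin n))

theorem isPath_segment (i : Fin n) :
    (Gpart n a).IsPath (Sum.inl i.castSucc) (Sum.inl i.succ) (segment S i) := by
  unfold segment
  split_ifs
  exacts [⟨rfl, rfl⟩, ⟨rfl, rfl, rfl⟩]

theorem isPath_partitionPath :
    (Gpart n a).IsPath (Sum.inl 0) (Sum.inl (Fin.last n)) (partitionPath S) :=
  (Gpart n a).isPath_flatten_ofFn (fun j => Sum.inl j) (segment S) (isPath_segment a S)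

theorem pathDelay_segment (i : Fin n) :
    (Gpart n a).pathDelay (segment S i) = if i ∈ S then a i else 0 := by
  unfold segment
  split_ifs <;> simp [Network.pathDelay, Gpart]

theorem pathDelay_partitionPath : (Gpart n a).pathDelay (partitionPath S) = ∑ i ∈ S, a i := by
  rw [partitionPath, Network.pathDelay_flatten, List.map_ofFn, List.sum_ofFn]
  simp only [Function.comp_apply, pathDelay_segment, Finset.sum_ite_mem, Finset.univ_inter]

theorem disjoint_partitionPath_compl : (partitionPath S).Disjoint (partitionPath Sᶜ) := by
  intro e he he'
  simp only [partitionPath, List.mem_flatten, List.mem_ofFn] at he he'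
  obtain ⟨_, ⟨i, rfl⟩, he⟩ := he
  obtain ⟨_, ⟨j, rfl⟩, he'⟩ := he'
  unfold segment at he he'
  split_ifs at he he' <;> aesop

end Gpart

theorem gpart_partition_to_flow_general (n b : ℕ) (hn : 1 ≤ n) (a : Fin n → ℕ)
    (S : Finset (Fin n)) (hS₁ : ∑ i ∈ S, a i = b) (hS₂ : ∑ i ∈ Sᶜ, a i = b) :
    ∃ p₁ p₂ : List (GE n),
      (Gpart n a).IsPath (Sum.inl 0) (Sum.inl (Fin.last n)) p₁ ∧
      (Gpart n a).IsPath (Sum.inl 0) (Sum.inl (Fin.last n)) p₂ ∧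
      (∀ e : GE n, ¬(e ∈ p₁ ∧ e ∈ p₂)) ∧
      (Gpart n a).pathDelay p₁ = b ∧ (Gpart n a).pathDelay p₂ = b ∧
      ∃ F : PathFlow (Gpart n a) (Sum.inl 0) (Sum.inl (Fin.last n)),
        F.f p₁ = 1 ∧ F.f p₂ = 1 ∧ (∀ p, p ≠ p₁ → p ≠ p₂ → F.f p = 0) ∧
        F.Feasible 2 ∧ F.maxDelay = b := by
  open Gpart PathFlow in
  set p₁ := partitionPath S
  set p₂ := partitionPath Sᶜ
  have hpath₁ : (Gpart n a).IsPath (Sum.inl 0) (Sum.inl (Fin.last n)) p₁ :=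
    isPath_partitionPath a S
  have hpath₂ : (Gpart n a).IsPath (Sum.inl 0) (Sum.inl (Fin.last n)) p₂ :=
    isPath_partitionPath a Sᶜ
  have hd₁ : (Gpart n a).pathDelay p₁ = b := (pathDelay_partitionPath a S).trans hS₁
  have hd₂ : (Gpart n a).pathDelay p₂ = b := (pathDelay_partitionPath a Sᶜ).trans hS₂
  have hdisj : p₁.Disjoint p₂ := disjoint_partitionPath_compl S
  have hne : p₁ ≠ p₂ := by
    intro h
    have hw : (Sum.inl 0 : GV n) ≠ Sum.inl (Fin.last n) := by simp [Fin.ext_iff]; omega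
    exact hpath₁.ne_nil _ hw
      (List.eq_nil_iff_forall_not_mem.mpr fun e he => hdisj he (h ▸ he))
  have hP : ∀ p ∈ ({p₁, p₂} : Finset _),
      (Gpart n a).IsPath (Sum.inl 0) (Sum.inl (Fin.last n)) p := by
    simpa using ⟨hpath₁, hpath₂⟩
  have hfeas := feasible_unitOn {p₁, p₂} hP
    (by simpa [Set.pairwise_pair] using fun _ => ⟨hdisj, hdisj.symm⟩) fun _ => le_rfl
  rw [Finset.card_pair hne, Nat.cast_two] at hfeas
  refine ⟨p₁, p₂, hpath₁, hpath₂, fun e he => hdisj he.1 he.2, hd₁, hd₂,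
    unitOn {p₁, p₂} hP, by simp [unitOn_apply], by simp [unitOn_apply],
    fun p h₁ h₂ => by simp [unitOn_apply, h₁, h₂], hfeas,
    by simp [maxDelay_unitOn, hd₁, hd₂]⟩

/-- **"Only if" part of Theorem 1.** For `n ≥ 1` and positive integers `a i` summing to `2 b`:
if the `a i` can be partitioned into two sets each summing to `b`, then in `G'` there are two
edge-disjoint `w₀`–`wₙ` paths, each of delay exactly `b`, and assigning a unit rate to each of
them yields a feasible flow of rate `R = 2` whose maximum delay is `b`. -/
theorem gpart_partition_to_flow (n b : ℕ) (hn : 1 ≤ n) (a : Fin n → ℕ)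
    (ha : ∀ i, 0 < a i) (hsum : ∑ i, a i = 2 * b)
    (S : Finset (Fin n)) (hS₁ : ∑ i ∈ S, a i = b) (hS₂ : ∑ i ∈ Sᶜ, a i = b) :
    ∃ p₁ p₂ : List (GE n),
      (Gpart n a).IsPath (Sum.inl 0) (Sum.inl (Fin.last n)) p₁ ∧
      (Gpart n a).IsPath (Sum.inl 0) (Sum.inl (Fin.last n)) p₂ ∧
      (∀ e : GE n, ¬(e ∈ p₁ ∧ e ∈ p₂)) ∧
      (Gpart n a).pathDelay p₁ = b ∧ (Gpart n a).pathDelay p₂ = b ∧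
      ∃ F : PathFlow (Gpart n a) (Sum.inl 0) (Sum.inl (Fin.last n)),
        F.f p₁ = 1 ∧ F.f p₂ = 1 ∧ (∀ p, p ≠ p₁ → p ≠ p₂ → F.f p = 0) ∧
        F.Feasible 2 ∧ F.maxDelay = b :=
  gpart_partition_to_flow_general n b hn a S hS₁ hS₂
end

section
/- Let n ≥ 3 and consider the building-block graph B_n with nodes a_1,…,a_n and b_1,…,b_{n-1}, where for each i ∈ {1,…,n−1} there is an edge (a_i, a_{i+1}) with delay 1 and edges (a_i, b_i), (b_i, a_{i+1}) with delay 0, and all edges have capacity 1. Then any two edge-disjoint a_1–a_n paths p_1, p_2 satisfy d^{p_1} + d^{p_2} = n − 1, and consequently max(d^{p_1}, d^{p_2}) ≥ ⌈(n−1)/2⌉. -/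
/-- The building-block graph `B_n` of Fig. 3: spine nodes `a_1,…,a_n`
(`Sum.inl i` = `a_{i+1}`) and detour nodes `b_1,…,b_{n-1}` (`Sum.inr i` = `b_{i+1}`);
for each of the `n - 1` layers there is a direct edge `(a_i, a_{i+1})` of delay `1` and
a zero-delay two-edge route `(a_i, b_i), (b_i, a_{i+1})`; all edges have capacity `1`. -/
abbrev Bblock (n : ℕ) : Network (GV (n - 1)) (GE (n - 1)) :=
  Gpart (n - 1) (fun _ => 1)

/-- The source `a_1` of `B_n`. -/
abbrev BblockSrc (n : ℕ) : GV (n - 1) := Sum.inl 0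

/-- The sink `a_n` of `B_n`. -/
abbrev BblockSink (n : ℕ) : GV (n - 1) := Sum.inl (Fin.last (n - 1))


namespace Network

variable {V E : Type} (N : Network V E)

@[simp]
theorem pathDelay_nil : N.pathDelay [] = 0 := rfl

@[simp]
theorem pathDelay_cons (e : E) (p : List E) :
    N.pathDelay (e :: p) = N.delay e + N.pathDelay p := List.sum_cons

end Network

namespace Gpart

open Sum

variable {m : ℕ} {a : Fin m → ℕ}

@[simp]
theorem delay_inl (j : Fin m) : (Gpart m a).delay (inl j) = a j := rfl

@[simp]
theorem delay_inr (e : Fin m ⊕ Fin m) : (Gpart m a).delay (inr e) = 0 := rfl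

theorem isPath_inl_cases {i k : Fin (m + 1)} {p : List (GE m)}
    (hp : (Gpart m a).IsPath (inl i) (inl k) p) :
    (p = [] ∧ i = k) ∨
      ∃ j : Fin m, j.castSucc = i ∧ ∃ q, (Gpart m a).IsPath (inl j.succ) (inl k) q ∧
        (p = inl j :: q ∨ p = inr (inl j) :: inr (inr j) :: q) := by
  match p, hp with
  | [], hp => exact .inl ⟨rfl, inl_injective hp⟩
  | inl j :: q, ⟨hsrc, hq⟩ => exact .inr ⟨j, inl_injective hsrc, q, hq, .inl rfl⟩
  | [inr (inl j)], ⟨_, hv⟩ => exact absurd hv inr_ne_inl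
  | inr (inl j) :: inl _ :: _, ⟨_, hesrc, _⟩ => exact absurd hesrc inl_ne_inr
  | inr (inl j) :: inr (inl _) :: _, ⟨_, hesrc, _⟩ => exact absurd hesrc inl_ne_inr
  | inr (inl j) :: inr (inr j') :: q, ⟨hsrc, hesrc, hq⟩ =>
    obtain rfl : j = j' := (inr_injective hesrc).symm
    exact .inr ⟨j, inl_injective hsrc, q, hq, .inr rfl⟩
  | inr (inr j) :: q, ⟨hsrc, _⟩ => exact absurd hsrc inr_ne_inl

theorem eq_nil_of_isPath_last {p : List (GE m)}
    (hp : (Gpart m a).IsPath (inl (Fin.last m)) (inl (Fin.last m)) p) : p = [] := by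
  rcases isPath_inl_cases hp with ⟨rfl, -⟩ | ⟨j, hj, -⟩
  · rfl
  · exact absurd hj (Fin.castSucc_ne_last j)

theorem isPath_castSucc_cases {j : Fin m} {p : List (GE m)}
    (hp : (Gpart m a).IsPath (inl j.castSucc) (inl (Fin.last m)) p) :
    ∃ q, (Gpart m a).IsPath (inl j.succ) (inl (Fin.last m)) q ∧
      (p = inl j :: q ∨ p = inr (inl j) :: inr (inr j) :: q) := by
  rcases isPath_inl_cases hp with ⟨-, hj⟩ | ⟨j', hj', hq⟩
  · exact absurd hj (Fin.castSucc_ne_last j)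
  · obtain rfl := Fin.castSucc_injective _ hj'
    exact hq

theorem sum_castSucc_le_eq_add (j₀ : Fin m) :
    ∑ j : Fin m with j₀.castSucc ≤ j.castSucc, a j =
      a j₀ + ∑ j : Fin m with j₀.succ ≤ j.castSucc, a j := by
  simp only [Fin.castSucc_le_castSucc_iff, Fin.succ_le_castSucc_iff, Finset.filter_le_eq_Ici,
    Finset.filter_lt_eq_Ioi, Finset.Ici_eq_cons_Ioi, Finset.sum_cons]

/-- Each layer contributes its direct edge to exactly one of two edge-disjoint paths, while the
detour costs nothing. -/
theorem pathDelay_add_pathDelay_eq_sum (i : Fin (m + 1)) {p q : List (GE m)}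
    (hp : (Gpart m a).IsPath (inl i) (inl (Fin.last m)) p)
    (hq : (Gpart m a).IsPath (inl i) (inl (Fin.last m)) q) (hpq : p.Disjoint q) :
    (Gpart m a).pathDelay p + (Gpart m a).pathDelay q =
      ∑ j : Fin m with i ≤ j.castSucc, a j := by
  induction i using Fin.reverseInduction generalizing p q with
  | last =>
    simp [eq_nil_of_isPath_last hp, eq_nil_of_isPath_last hq, Fin.castSucc_ne_last]
  | cast j₀ ih =>
    obtain ⟨p', hp', rfl | rfl⟩ := isPath_castSucc_cases hp <;>
      obtain ⟨q', hq', rfl | rfl⟩ := isPath_castSucc_cases hq <;>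
      simp only [List.disjoint_cons_left, List.disjoint_cons_right] at hpq
    · simp at hpq
    · rw [sum_castSucc_le_eq_add, ← ih hp' hq' hpq.2.2.2]
      simp only [Network.pathDelay_cons, delay_inl, delay_inr]
      omega
    · rw [sum_castSucc_le_eq_add, ← ih hp' hq' hpq.2.2.2]
      simp only [Network.pathDelay_cons, delay_inl, delay_inr]
      omega
    · simp at hpq

end Gpart

theorem bblock_disjoint_paths_delay_general (n : ℕ)
    (p₁ p₂ : List (GE (n - 1)))
    (h₁ : (Bblock n).IsPath (BblockSrc n) (BblockSink n) p₁)
    (h₂ : (Bblock n).IsPath (BblockSrc n) (BblockSink n) p₂)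
    (hdisj : ∀ e, ¬(e ∈ p₁ ∧ e ∈ p₂)) :
    (Bblock n).pathDelay p₁ + (Bblock n).pathDelay p₂ = n - 1 ∧
    (n - 1 + 1) / 2 ≤ max ((Bblock n).pathDelay p₁) ((Bblock n).pathDelay p₂) := by
  have hsum : (Bblock n).pathDelay p₁ + (Bblock n).pathDelay p₂ = n - 1 := by
    simpa using Gpart.pathDelay_add_pathDelay_eq_sum 0 h₁ h₂ fun e he₁ he₂ => hdisj e ⟨he₁, he₂⟩
  exact ⟨hsum, by omega⟩

/-- **Edge-disjoint path pairs in `B_n` (key step of Lemma 2).**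
For `n ≥ 3`, any two edge-disjoint `a_1`–`a_n` paths `p₁, p₂` in `B_n` satisfy
`d^{p₁} + d^{p₂} = n - 1`, hence `max (d^{p₁}) (d^{p₂}) ≥ ⌈(n-1)/2⌉`. -/
theorem bblock_disjoint_paths_delay (n : ℕ) (hn : 3 ≤ n)
    (p₁ p₂ : List (GE (n - 1)))
    (h₁ : (Bblock n).IsPath (BblockSrc n) (BblockSink n) p₁)
    (h₂ : (Bblock n).IsPath (BblockSrc n) (BblockSink n) p₂)
    (hdisj : ∀ e, ¬(e ∈ p₁ ∧ e ∈ p₂)) :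
    (Bblock n).pathDelay p₁ + (Bblock n).pathDelay p₂ = n - 1 ∧
    (n - 1 + 1) / 2 ≤ max ((Bblock n).pathDelay p₁) ((Bblock n).pathDelay p₂) :=
  bblock_disjoint_paths_delay_general n p₁ p₂ h₁ h₂ hdisj
end
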